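/- Let R be a reduced ring and I an ideal generated by central idempotents, S = R/I, φ : R → S the quotient map. If a ∧_rr b = c exists in R, then φ(c) = φ(a) ∧_rr φ(b) in S. Consequently if R is rr-good then S is rr-good. -/

import Mathlib

/-!
Kernel elements are killed by central idempotents, so if `φ d ≤_rr φ a` and `φ d ≤_rr φ b`,
there is a central idempotent `g` with `φ g = 1` annihilating both `d² - da` and `d² - db`.
Then `g d` is a lift of `φ d` lying rr-below `a` and `b` in `R`, hence below `c = a ∧_rr b`,
and applying `φ` gives `φ d ≤_rr φ c`.
-/

/-- `a ≤_rr b`. -/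
def RRLe {M : Type*} [Mul M] (a b : M) : Prop := a * a = a * b

/-- `c = a ∧_rr b`. -/
def IsRRInf {M : Type*} [Mul M] (a b c : M) : Prop :=
  RRLe c a ∧ RRLe c b ∧ ∀ d, RRLe d a → RRLe d b → RRLe d c

theorem RRLe.map {M N F : Type*} [Mul M] [Mul N] [FunLike F M N] [MulHomClass F M N]
    (f : F) {a b : M} (h : RRLe a b) : RRLe (f a) (f b) := by
  unfold RRLe
  rw [← map_mul, ← map_mul, h]

section Ring

variable {R S : Type*} [Ring R]

theorem rrLe_mul_left_iff {e d a : R} (he : IsIdempotentElem e) (hc : ∀ r, Commute e r) :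
    RRLe (e * d) a ↔ e * (d * d - d * a) = 0 := by
  have hsq : e * d * (e * d) = e * (d * d) := by
    rw [mul_assoc, ← mul_assoc d, ← (hc d).eq, ← mul_assoc, ← mul_assoc, he.eq, mul_assoc]
  rw [RRLe, hsq, mul_assoc, mul_sub, sub_eq_zero]

variable [Ring S] (φ : R →+* S)
  (hidem : ∀ x : R, φ x = 0 →
    ∃ e : R, φ e = 0 ∧ IsIdempotentElem e ∧ (∀ r, Commute e r) ∧ e * x = x)
include hidem

theorem exists_central_idempotent_map_eq_one_mul_eq_zero {x : R} (hx : φ x = 0) :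
    ∃ g : R, φ g = 1 ∧ IsIdempotentElem g ∧ (∀ r, Commute g r) ∧ g * x = 0 := by
  obtain ⟨e, he0, he, hc, hex⟩ := hidem x hx
  refine ⟨1 - e, by rw [map_sub, map_one, he0, sub_zero], he.one_sub,
    fun r => (Commute.one_left r).sub_left (hc r), ?_⟩
  rw [sub_mul, one_mul, hex, sub_self]

theorem exists_lift_rrLe_of_map_rrLe {a b d : R} (ha : RRLe (φ d) (φ a)) (hb : RRLe (φ d) (φ b)) :
    ∃ d' : R, φ d' = φ d ∧ RRLe d' a ∧ RRLe d' b := by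
  have hker : ∀ {y}, RRLe (φ d) (φ y) → φ (d * d - d * y) = 0 := fun h => by
    rw [map_sub, map_mul, map_mul, h, sub_self]
  obtain ⟨g₁, hg₁1, hg₁, hc₁, hg₁a⟩ :=
    exists_central_idempotent_map_eq_one_mul_eq_zero φ hidem (hker ha)
  obtain ⟨g₂, hg₂1, hg₂, hc₂, hg₂b⟩ :=
    exists_central_idempotent_map_eq_one_mul_eq_zero φ hidem (hker hb)
  have hg : IsIdempotentElem (g₁ * g₂) := hg₁.mul_of_commute (hc₁ g₂) hg₂
  have hc : ∀ r, Commute (g₁ * g₂) r := fun r => (hc₁ r).mul_left (hc₂ r)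
  refine ⟨g₁ * g₂ * d, by rw [map_mul, map_mul, hg₁1, hg₂1, one_mul, one_mul], ?_, ?_⟩
  · rw [rrLe_mul_left_iff hg hc, (hc₁ g₂).eq, mul_assoc, hg₁a, mul_zero]
  · rw [rrLe_mul_left_iff hg hc, mul_assoc, hg₂b, mul_zero]

theorem IsRRInf.map_of_surjective (hsurj : Function.Surjective φ) {a b c : R}
    (h : IsRRInf a b c) : IsRRInf (φ a) (φ b) (φ c) := by
  obtain ⟨hca, hcb, hinf⟩ := h
  refine ⟨hca.map φ, hcb.map φ, fun t hta htb => ?_⟩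
  obtain ⟨d, rfl⟩ := hsurj t
  obtain ⟨d', hd', hd'a, hd'b⟩ := exists_lift_rrLe_of_map_rrLe φ hidem hta htb
  rw [← hd']
  exact (hinf d' hd'a hd'b).map φ

end Ring

theorem stmt_12_general {R S : Type*} [Ring R] [Ring S]
    (φ : R →+* S) (hsurj : Function.Surjective φ)
    (hidem : ∀ x : R, φ x = 0 →
      ∃ e : R, φ e = 0 ∧ e * e = e ∧ (∀ r : R, e * r = r * e) ∧ e * x = x) :
    (∀ a b c : R,
      (c * c = c * a ∧ c * c = c * b ∧
        ∀ d : R, d * d = d * a → d * d = d * b → d * d = d * c) →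
      (φ c * φ c = φ c * φ a ∧ φ c * φ c = φ c * φ b ∧
        ∀ t : S, t * t = t * φ a → t * t = t * φ b → t * t = t * φ c)) ∧
    ((∀ a b : R, ∃ c : R, c * c = c * a ∧ c * c = c * b ∧
        ∀ d : R, d * d = d * a → d * d = d * b → d * d = d * c) →
      ∀ x y : S, ∃ z : S, z * z = z * x ∧ z * z = z * y ∧
        ∀ t : S, t * t = t * x → t * t = t * y → t * t = t * z) := by
  have hmap : ∀ a b c : R, IsRRInf a b c → IsRRInf (φ a) (φ b) (φ c) :=
    fun _ _ _ h => h.map_of_surjective φ hidem hsurj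
  refine ⟨hmap, fun hgood x y => ?_⟩
  obtain ⟨a, rfl⟩ := hsurj x
  obtain ⟨b, rfl⟩ := hsurj y
  obtain ⟨c, hc⟩ := hgood a b
  exact ⟨φ c, hmap a b c hc⟩

/-- If `I = ker φ` is generated by central idempotents then `φ` preserves
rr-infima; consequently, if `R` is rr-good so is its image. -/
theorem stmt_12 {R S : Type*} [Ring R] [IsReduced R] [Ring S] [IsReduced S]
    (φ : R →+* S) (hsurj : Function.Surjective φ)
    (hidem : ∀ x : R, φ x = 0 →
      ∃ e : R, φ e = 0 ∧ e * e = e ∧ (∀ r : R, e * r = r * e) ∧ e * x = x) :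
    (∀ a b c : R,
      (c * c = c * a ∧ c * c = c * b ∧
        ∀ d : R, d * d = d * a → d * d = d * b → d * d = d * c) →
      (φ c * φ c = φ c * φ a ∧ φ c * φ c = φ c * φ b ∧
        ∀ t : S, t * t = t * φ a → t * t = t * φ b → t * t = t * φ c)) ∧
    ((∀ a b : R, ∃ c : R, c * c = c * a ∧ c * c = c * b ∧
        ∀ d : R, d * d = d * a → d * d = d * b → d * d = d * c) →
      ∀ x y : S, ∃ z : S, z * z = z * x ∧ z * z = z * y ∧
        ∀ t : S, t * t = t * x → t * t = t * y → t * t = t * z) :=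
  stmt_12_general φ hsurj hidem
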